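/- Let K be a convex body in S^d ⊆ ℝ^{d+1}. For x ∈ S^d with −x in the interior of K*, let f_x denote the central projection of the open hemisphere H_x onto the tangent hyperplane {y ∈ ℝ^{d+1} : ⟨x,y⟩ = 1} of S^d at x, given by f_x(y) = y/⟨x,y⟩; then f_x(K) is a convex body of that d-dimensional affine hyperplane. The spherical illumination number satisfies I_{S^d}(K) = min { I(f_x(K)) : x ∈ S^d, −x ∈ interior of K* }, where I(f_x(K)) is the Euclidean illumination number of f_x(K) computed within the hyperplane. -/

import Mathlib

/-!
If `-x` is interior to `K*` then, `K` being compact, `K` lies in the open hemisphere `H_x`, and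
conversely. On `H_x` the central projection `f_x` is a homeomorphism onto the tangent hyperplane
(with inverse `y ↦ y / ‖y‖`) that sends spherical arcs to segments, so `f_x(K)` is a convex body
whose relative interior and boundary are the images of those of `K`. For `p ⊥ x`, `f_x` maps the
great circle through `p` and `q` onto the line through `f_x(q)` with direction `p`, and the arc
from `p` to `q` onto the ray in direction `p`; hence `p` illuminates `q` exactly when the direction
`-p` illuminates `f_x(q)`. This gives `I_{S^d}(K) ≤ I(f_x(K))` using the great sphere `x^⊥`.
Conversely, a great sphere `u^⊥` missing the connected set `K` leaves `K` in `H_u` or `H_{-u}`,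
and the illuminating points on it become illuminating directions for that projection.
-/

open RealInnerProductSpace Metric Set

noncomputable section

/-- Euclidean `n`-space. -/
abbrev Euc (n : ℕ) := EuclideanSpace ℝ (Fin n)

/-- The unit sphere `S^d` in `ℝ^{d+1}`. -/
def uSphere (d : ℕ) : Set (Euc (d + 1)) := Metric.sphere 0 1

/-- Radial (normalizing) projection onto the unit sphere. -/
def nproj {n : ℕ} (x : Euc n) : Euc n := ‖x‖⁻¹ • x

/-- The spherical segment (shorter great-circle arc) with endpoints `p` and `q`
(meaningful when `p ≠ -q`). -/
def sphSeg {n : ℕ} (p q : Euc n) : Set (Euc n) :=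
  (fun t : ℝ => nproj ((1 - t) • p + t • q)) '' Set.Icc 0 1

/-- The relative interior of the spherical segment with endpoints `p` and `q`. -/
def sphOpenSeg {n : ℕ} (p q : Euc n) : Set (Euc n) :=
  (fun t : ℝ => nproj ((1 - t) • p + t • q)) '' Set.Ioo 0 1

/-- The great circle through `p` and `q`. -/
def greatCircle (d : ℕ) (p q : Euc (d + 1)) : Set (Euc (d + 1)) :=
  {z ∈ uSphere d | z ∈ Submodule.span ℝ {p, q}}

/-- The open hemisphere with center `x`. -/
def openHemi (d : ℕ) (x : Euc (d + 1)) : Set (Euc (d + 1)) :=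
  {y ∈ uSphere d | 0 < ⟪x, y⟫}

/-- The `(d-1)`-dimensional great sphere of `S^d` with pole `u`. -/
def greatSphere (d : ℕ) (u : Euc (d + 1)) : Set (Euc (d + 1)) :=
  {y ∈ uSphere d | ⟪u, y⟫ = 0}

/-- A set `C ⊆ S^d` is spherically convex if it is contained in an open hemisphere
and contains the shorter arc connecting any two of its points. -/
def SphConvex (d : ℕ) (C : Set (Euc (d + 1))) : Prop :=
  C ⊆ uSphere d ∧ (∃ x ∈ uSphere d, C ⊆ openHemi d x) ∧
    ∀ p ∈ C, ∀ q ∈ C, sphSeg p q ⊆ C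

/-- The interior of `K` relative to the sphere `S^d`. -/
def sphInt (d : ℕ) (K : Set (Euc (d + 1))) : Set (Euc (d + 1)) :=
  {x ∈ uSphere d | ∃ U : Set (Euc (d + 1)), IsOpen U ∧ x ∈ U ∧ U ∩ uSphere d ⊆ K}

/-- The boundary of a closed set `K ⊆ S^d` relative to the sphere `S^d`. -/
def sphBd (d : ℕ) (K : Set (Euc (d + 1))) : Set (Euc (d + 1)) := K \ sphInt d K

/-- A convex body in `S^d`: a compact spherically convex set with nonempty interior
relative to `S^d`. -/
def IsSphBody (d : ℕ) (K : Set (Euc (d + 1))) : Prop :=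
  IsCompact K ∧ SphConvex d K ∧ (sphInt d K).Nonempty

/-- The boundary point `q` of `K` is illuminated from the point `p`. -/
def SphIlluminated (d : ℕ) (K : Set (Euc (d + 1))) (p q : Euc (d + 1)) : Prop :=
  q ≠ -p ∧ sphSeg p q ∩ sphInt d K = ∅ ∧ (greatCircle d p q ∩ sphInt d K).Nonempty

/-- The set `S` illuminates the convex body `K ⊆ S^d`. -/
def SphIlluminates (d : ℕ) (K S : Set (Euc (d + 1))) : Prop :=
  ∀ q ∈ sphBd d K, ∃ p ∈ S, SphIlluminated d K p q

/-- The illumination number of a convex body `K` in `S^d`: the smallest cardinality of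
a set illuminating `K` and lying on a `(d-1)`-dimensional great sphere disjoint from `K`. -/
def sphIllumNumber (d : ℕ) (K : Set (Euc (d + 1))) : ℕ∞ :=
  sInf {n : ℕ∞ | ∃ u ∈ uSphere d, greatSphere d u ∩ K = ∅ ∧
    ∃ S : Finset (Euc (d + 1)), ↑S ⊆ greatSphere d u ∧ SphIlluminates d K ↑S ∧
      (S.card : ℕ∞) = n}

/-- A convex body in a Euclidean space: compact, convex, with nonempty interior. -/
def IsConvexBody {n : ℕ} (K : Set (Euc n)) : Prop :=
  IsCompact K ∧ Convex ℝ K ∧ (interior K).Nonempty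

/-- The boundary point `p` of `K` is illuminated from the direction `v`. -/
def IlluminatedDir {n : ℕ} (K : Set (Euc n)) (v p : Euc n) : Prop :=
  ∃ t : ℝ, 0 < t ∧ p + t • v ∈ interior K

/-- The finite set of unit vectors `D` illuminates the convex body `K`. -/
def IlluminatesDirs {n : ℕ} (D : Finset (Euc n)) (K : Set (Euc n)) : Prop :=
  (∀ v ∈ D, ‖v‖ = 1) ∧ ∀ p ∈ frontier K, ∃ v ∈ D, IlluminatedDir K v p

/-- The illumination number of a convex body in Euclidean space. -/
def illumNumber {n : ℕ} (K : Set (Euc n)) : ℕ∞ :=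
  sInf {m : ℕ∞ | ∃ D : Finset (Euc n), IlluminatesDirs D K ∧ (D.card : ℕ∞) = m}

/-- The illumination number of a convex body `K` of an affine subspace of a Euclidean
space, computed within the affine span of `K` (directions are parallel to the affine
span; interior and boundary are relative to the affine span). -/
def intIllumNumber {n : ℕ} (K : Set (Euc n)) : ℕ∞ :=
  sInf {m : ℕ∞ | ∃ D : Finset (Euc n),
    (∀ v ∈ D, ‖v‖ = 1 ∧ v ∈ (affineSpan ℝ K).direction) ∧
    (∀ p ∈ intrinsicFrontier ℝ K, ∃ v ∈ D, ∃ t : ℝ, 0 < t ∧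
      p + t • v ∈ intrinsicInterior ℝ K) ∧
    (D.card : ℕ∞) = m}

/-- A face of a convex body `K` in Euclidean space: a convex subset `F ⊆ K` such that
any segment of `K` whose relative interior meets `F` is contained in `F`. -/
def IsFace {n : ℕ} (K F : Set (Euc n)) : Prop :=
  F ⊆ K ∧ Convex ℝ F ∧
    ∀ x ∈ K, ∀ y ∈ K, (openSegment ℝ x y ∩ F).Nonempty → segment ℝ x y ⊆ F

/-- The dimension of a subset of a Euclidean space (dimension of its affine hull). -/
def faceDim {n : ℕ} (F : Set (Euc n)) : ℕ := Module.finrank ℝ (vectorSpan ℝ F)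

/-- A face of a convex body `K` in `S^d`: a spherically convex subset `F ⊆ K` such that
any spherical segment of `K` whose relative interior meets `F` is contained in `F`. -/
def IsSphFace (d : ℕ) (K F : Set (Euc (d + 1))) : Prop :=
  F ⊆ K ∧ SphConvex d F ∧
    ∀ p ∈ K, ∀ q ∈ K, (sphOpenSeg p q ∩ F).Nonempty → sphSeg p q ⊆ F

/-- The (spherical) dimension of a subset `F` of `S^d`: one less than the dimension of
its linear hull. -/
def sphFaceDim (d : ℕ) (F : Set (Euc (d + 1))) : ℕ :=
  Module.finrank ℝ (Submodule.span ℝ F) - 1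

/-- The polar body of a convex body `K ⊆ S^d`. -/
def sphPolar (d : ℕ) (K : Set (Euc (d + 1))) : Set (Euc (d + 1)) :=
  {x ∈ uSphere d | ∀ y ∈ K, ⟪x, y⟫ ≤ 0}

/-- An exposed face of a convex body `L` in `S^d`: a nonempty intersection of `L`
with a supporting great sphere. -/
def IsSphExposedFace (d : ℕ) (L F : Set (Euc (d + 1))) : Prop :=
  F.Nonempty ∧ ∃ u ∈ uSphere d, (∀ y ∈ L, ⟪u, y⟫ ≤ 0) ∧ F = {y ∈ L | ⟪u, y⟫ = 0}

/-- The conjugate face of an exposed face `F` of a convex body `K ⊆ S^d`. -/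
def conjFace (d : ℕ) (K F : Set (Euc (d + 1))) : Set (Euc (d + 1)) :=
  {x ∈ sphPolar d K | ∀ y ∈ F, ⟪x, y⟫ = 0}

/-- Two Euclidean convex bodies are combinatorially equivalent if there is a
homeomorphism between their boundaries mapping faces to faces. -/
def CombEquiv {n : ℕ} (K K' : Set (Euc n)) : Prop :=
  ∃ h : (frontier K) ≃ₜ (frontier K'),
    ∀ X : Set (frontier K),
      IsFace K (Subtype.val '' X) ↔ IsFace K' (Subtype.val '' (h '' X))

/-- The combinatorial illumination number of a Euclidean convex body `K`: the smallest
number of directions that illuminate some convex body combinatorially equivalent to `K`. -/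
def combIllumNumber {n : ℕ} (K : Set (Euc n)) : ℕ∞ :=
  sInf {m : ℕ∞ | ∃ K' : Set (Euc n), IsConvexBody K' ∧ CombEquiv K K' ∧
    ∃ D : Finset (Euc n), IlluminatesDirs D K' ∧ (D.card : ℕ∞) = m}

/-- A convex polytope in `S^d`: a convex body that is the intersection of finitely many
closed hemispheres. -/
def IsSphPolytope (d : ℕ) (P : Set (Euc (d + 1))) : Prop :=
  IsSphBody d P ∧ ∃ s : Finset (Euc (d + 1)), (∀ u ∈ s, u ∈ uSphere d) ∧
    P = uSphere d ∩ {y | ∀ u ∈ s, ⟪u, y⟫ ≤ 0}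

end

/-- The central projection from the open hemisphere with center `x` onto the tangent
hyperplane `{y : ⟪x, y⟫ = 1}` of `S^d` at `x`. -/
noncomputable def centralProj {n : ℕ} (x y : Euc n) : Euc n := (⟪x, y⟫)⁻¹ • y

open Filter Topology

section IntrinsicInterior

variable {E : Type*} [AddCommGroup E] [Module ℝ E] [TopologicalSpace E] {s : Set E}
  {A : AffineSubspace ℝ E} {z : E}

theorem mem_intrinsicInterior_iff_of_affineSpan_eq (hA : affineSpan ℝ s = A) :
    z ∈ intrinsicInterior ℝ s ↔ z ∈ A ∧ s ∈ 𝓝[A] z := by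
  subst hA
  constructor
  · rintro ⟨y, hy, rfl⟩
    exact ⟨y.2, preimage_coe_mem_nhds_subtype.1 (mem_interior_iff_mem_nhds.1 hy)⟩
  · rintro ⟨hz, hs⟩
    exact ⟨⟨z, hz⟩, mem_interior_iff_mem_nhds.2 (preimage_coe_mem_nhds_subtype.2 hs), rfl⟩

theorem intrinsicFrontier_eq_diff_of_isClosed (hs : IsClosed s) :
    intrinsicFrontier ℝ s = s \ intrinsicInterior ℝ s := by
  rw [← intrinsicClosure_sdiff_intrinsicInterior,
    IsClosed.intrinsicClosure (hs.preimage continuous_subtype_val)]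

variable [IsTopologicalAddGroup E] [ContinuousSMul ℝ E]

theorem affineSpan_eq_of_mem_nhdsWithin (hsA : s ⊆ A) (hz : z ∈ A) (hs : s ∈ 𝓝[A] z) :
    affineSpan ℝ s = A := by
  refine le_antisymm (affineSpan_le.2 hsA) fun a ha => ?_
  have hline : Tendsto (AffineMap.lineMap z a) (𝓝 (0 : ℝ)) (𝓝[A] z) := by
    refine tendsto_nhdsWithin_iff.2
      ⟨?_, Eventually.of_forall fun ε => AffineMap.lineMap_mem ε hz ha⟩
    simpa using (AffineMap.lineMap_continuous (R := ℝ) (p := z) (q := a)).tendsto 0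
  obtain ⟨ε, hεs, hε⟩ :=
    ((hline.eventually hs).filter_mono nhdsWithin_le_nhds |>.and
      (self_mem_nhdsWithin (s := Ioi (0 : ℝ)))).exists
  have hmem := AffineMap.lineMap_mem (Q := affineSpan ℝ s) ε⁻¹
    (subset_affineSpan ℝ s (mem_of_mem_nhdsWithin hz hs)) (subset_affineSpan ℝ s hεs)
  convert hmem using 1
  simp [AffineMap.lineMap_apply_module', smul_smul, inv_mul_cancel₀ (ne_of_gt hε)]

protected theorem Convex.intrinsicInterior (hs : Convex ℝ s) :
    Convex ℝ (intrinsicInterior ℝ s) := by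
  intro a ha b hb μ ν hμ hν hμν
  rcases hμ.eq_or_lt with rfl | hμ
  · rwa [zero_smul, zero_add, (by linarith : ν = 1), one_smul]
  obtain ⟨haA, has⟩ := (mem_intrinsicInterior_iff_of_affineSpan_eq rfl).1 ha
  obtain ⟨hbA, hbs⟩ := (mem_intrinsicInterior_iff_of_affineSpan_eq rfl).1 hb
  have hc : μ • a + ν • b = AffineMap.homothety b μ a := by
    rw [AffineMap.homothety_apply, vsub_eq_sub, vadd_eq_add, ← sub_eq_of_eq_add' hμν.symm]
    module
  have hGc : AffineMap.homothety b μ⁻¹ (μ • a + ν • b) = a := by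
    rw [hc, ← AffineMap.comp_apply, ← AffineMap.homothety_mul, inv_mul_cancel₀ hμ.ne',
      AffineMap.homothety_one, AffineMap.id_apply]
  have hG : Tendsto (AffineMap.homothety b μ⁻¹) (𝓝[affineSpan ℝ s] (μ • a + ν • b))
      (𝓝[affineSpan ℝ s] a) := by
    have h := (AffineMap.homothety_continuous b μ⁻¹).continuousWithinAt.tendsto_nhdsWithin
      (x := μ • a + ν • b) fun y hy => AffineMap.lineMap_mem _ hbA hy
    rwa [hGc] at h
  refine (mem_intrinsicInterior_iff_of_affineSpan_eq rfl).2
    ⟨hc ▸ AffineMap.lineMap_mem μ hbA haA, mem_of_superset (hG has) fun y hy => ?_⟩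
  have hy' := hs.lineMap_mem (mem_of_mem_nhdsWithin hbA hbs) hy ⟨hμ.le, by linarith⟩
  rwa [← AffineMap.homothety_eq_lineMap, ← AffineMap.comp_apply, ← AffineMap.homothety_mul,
    mul_inv_cancel₀ hμ.ne', AffineMap.homothety_one, AffineMap.id_apply] at hy'

end IntrinsicInterior

section CentralProjection

variable {n : ℕ} {x p q w : Euc n}

theorem norm_nproj (hw : w ≠ 0) : ‖nproj w‖ = 1 := by
  rw [nproj, norm_smul, norm_inv, norm_norm, inv_mul_cancel₀ (norm_ne_zero_iff.2 hw)]

theorem nproj_of_norm_eq_one (hw : ‖w‖ = 1) : nproj w = w := by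
  rw [nproj, hw, inv_one, one_smul]

theorem nproj_smul {c : ℝ} (hc : 0 < c) (w : Euc n) : nproj (c • w) = nproj w := by
  rw [nproj, nproj, norm_smul, Real.norm_of_nonneg hc.le, smul_smul, mul_inv_rev,
    inv_mul_cancel_right₀ hc.ne']

theorem inner_nproj (x w : Euc n) : ⟪x, nproj w⟫ = ‖w‖⁻¹ * ⟪x, w⟫ :=
  real_inner_smul_right _ _ _

theorem continuousAt_nproj (hw : w ≠ 0) : ContinuousAt nproj w :=
  ((continuousAt_id.norm).inv₀ (norm_ne_zero_iff.2 hw)).smul continuousAt_id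

theorem centralProj_smul {c : ℝ} (hc : c ≠ 0) (w : Euc n) :
    centralProj x (c • w) = centralProj x w := by
  rw [centralProj, centralProj, real_inner_smul_right, smul_smul, mul_inv_rev,
    inv_mul_cancel_right₀ hc]

theorem centralProj_nproj (x : Euc n) (hw : w ≠ 0) : centralProj x (nproj w) = centralProj x w :=
  centralProj_smul (inv_ne_zero (norm_ne_zero_iff.2 hw)) w

theorem inner_centralProj (h : ⟪x, w⟫ ≠ 0) : ⟪x, centralProj x w⟫ = 1 := by
  rw [centralProj, real_inner_smul_right, inv_mul_cancel₀ h]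

theorem centralProj_of_inner_eq_one (h : ⟪x, w⟫ = 1) : centralProj x w = w := by
  rw [centralProj, h, inv_one, one_smul]

theorem nproj_centralProj (hw : ‖w‖ = 1) (h : 0 < ⟪x, w⟫) : nproj (centralProj x w) = w := by
  rw [centralProj, nproj_smul (inv_pos.2 h), nproj_of_norm_eq_one hw]

theorem continuousAt_centralProj (h : ⟪x, w⟫ ≠ 0) : ContinuousAt (centralProj x) w :=
  ((continuous_const.inner continuous_id).continuousAt.inv₀ h).smul continuousAt_id

theorem inner_smul_add_smul_of_inner_eq_zero (hp : ⟪x, p⟫ = 0) (α β : ℝ) :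
    ⟪x, α • p + β • q⟫ = β * ⟪x, q⟫ := by
  rw [inner_add_right, real_inner_smul_right, real_inner_smul_right, hp, mul_zero, zero_add]

theorem centralProj_smul_add_smul (hp : ⟪x, p⟫ = 0) (hq : ⟪x, q⟫ ≠ 0) {α β : ℝ} (hβ : β ≠ 0) :
    centralProj x (α • p + β • q) = centralProj x q + (α / (β * ⟪x, q⟫)) • p := by
  rw [centralProj, centralProj, inner_smul_add_smul_of_inner_eq_zero hp]
  match_scalars <;> field_simp

theorem nproj_smul_add_smul_mem_sphSeg {α β : ℝ} (hα : 0 ≤ α) (hβ : 0 ≤ β) (hαβ : 0 < α + β) :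
    nproj (α • p + β • q) ∈ sphSeg p q := by
  refine ⟨β / (α + β), ⟨by positivity, (div_le_one hαβ).2 (by linarith)⟩, ?_⟩
  have h : (1 - β / (α + β)) • p + (β / (α + β)) • q = (α + β)⁻¹ • (α • p + β • q) := by
    match_scalars
    · field_simp; ring
    · field_simp
  simp only [h, nproj_smul (inv_pos.2 hαβ)]

end CentralProjection

def tangentHyperplane {n : ℕ} (x : Euc n) : AffineSubspace ℝ (Euc n) where
  carrier := {z | ⟪x, z⟫ = 1}
  smul_vsub_vadd_mem' c p₁ p₂ p₃ h₁ h₂ h₃ := by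
    simp only [Set.mem_ofPred_eq, vsub_eq_sub, vadd_eq_add, inner_add_right,
      real_inner_smul_right, inner_sub_right] at *
    rw [h₁, h₂, h₃]; ring

section TangentHyperplane

variable {n : ℕ} {x z : Euc n}

theorem mem_tangentHyperplane : z ∈ tangentHyperplane x ↔ ⟪x, z⟫ = 1 := Iff.rfl

theorem ne_zero_of_mem_tangentHyperplane (hz : z ∈ tangentHyperplane x) : z ≠ 0 := by
  rintro rfl
  simp [mem_tangentHyperplane] at hz

theorem mem_direction_tangentHyperplane (hz : z ∈ tangentHyperplane x) {v : Euc n} :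
    v ∈ (tangentHyperplane x).direction ↔ ⟪x, v⟫ = 0 := by
  rw [← AffineSubspace.vadd_mem_iff_mem_direction v hz, vadd_eq_add, mem_tangentHyperplane,
    inner_add_right, mem_tangentHyperplane.1 hz, add_eq_right]

end TangentHyperplane

section Sphere

variable {d : ℕ} {K : Set (Euc (d + 1))} {x y : Euc (d + 1)}

theorem mem_uSphere_iff : y ∈ uSphere d ↔ ‖y‖ = 1 := mem_sphere_zero_iff_norm

theorem neg_mem_uSphere (hx : x ∈ uSphere d) : -x ∈ uSphere d := by
  rwa [mem_uSphere_iff, norm_neg, ← mem_uSphere_iff]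

theorem nproj_mem_uSphere {w : Euc (d + 1)} (hw : w ≠ 0) : nproj w ∈ uSphere d :=
  mem_uSphere_iff.2 (norm_nproj hw)

theorem self_mem_tangentHyperplane (hx : x ∈ uSphere d) : x ∈ tangentHyperplane x := by
  rw [mem_tangentHyperplane, real_inner_self_eq_norm_sq, mem_uSphere_iff.1 hx, one_pow]

theorem mem_sphInt_iff : y ∈ sphInt d K ↔ y ∈ uSphere d ∧ K ∈ 𝓝[uSphere d] y := by
  simp only [sphInt, mem_nhdsWithin, Set.mem_ofPred_eq]

theorem sphInt_subset : sphInt d K ⊆ K :=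
  fun _ hy => mem_of_mem_nhdsWithin hy.1 (mem_sphInt_iff.1 hy).2

theorem greatSphere_neg (u : Euc (d + 1)) : greatSphere d (-u) = greatSphere d u := by
  simp only [greatSphere, inner_neg_left, neg_eq_zero]

end Sphere

section Hemisphere

variable {d : ℕ} {K : Set (Euc (d + 1))} {x y z : Euc (d + 1)}

theorem centralProj_mem_tangentHyperplane (hy : y ∈ openHemi d x) :
    centralProj x y ∈ tangentHyperplane x :=
  inner_centralProj hy.2.ne'

theorem nproj_centralProj_of_mem_openHemi (hy : y ∈ openHemi d x) :
    nproj (centralProj x y) = y :=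
  nproj_centralProj (mem_uSphere_iff.1 hy.1) hy.2

theorem nproj_mem_openHemi (hz : z ∈ tangentHyperplane x) : nproj z ∈ openHemi d x := by
  refine ⟨nproj_mem_uSphere (ne_zero_of_mem_tangentHyperplane hz), ?_⟩
  rw [inner_nproj, mem_tangentHyperplane.1 hz, mul_one, inv_pos, norm_pos_iff]
  exact ne_zero_of_mem_tangentHyperplane hz

theorem openHemi_mem_nhdsWithin (hy : y ∈ openHemi d x) : openHemi d x ∈ 𝓝[uSphere d] y :=
  have hopen : IsOpen {w : Euc (d + 1) | 0 < ⟪x, w⟫} :=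
    isOpen_lt continuous_const (continuous_const.inner continuous_id)
  inter_mem_nhdsWithin _ (hopen.mem_nhds hy.2)

theorem centralProj_image_subset_tangentHyperplane (hKx : K ⊆ openHemi d x) :
    centralProj x '' K ⊆ tangentHyperplane x :=
  image_subset_iff.2 fun _ hy => centralProj_mem_tangentHyperplane (hKx hy)

theorem centralProj_mem_image_iff (hKx : K ⊆ openHemi d x) (hy : y ∈ openHemi d x) :
    centralProj x y ∈ centralProj x '' K ↔ y ∈ K := by
  refine ⟨?_, mem_image_of_mem _⟩
  rintro ⟨k, hk, hky⟩
  rwa [← nproj_centralProj_of_mem_openHemi hy, ← hky, nproj_centralProj_of_mem_openHemi (hKx hk)]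

theorem isCompact_centralProj_image (hKc : IsCompact K) (hKx : K ⊆ openHemi d x) :
    IsCompact (centralProj x '' K) :=
  hKc.image_of_continuousOn fun _ hy => (continuousAt_centralProj (hKx hy).2.ne').continuousWithinAt

/-- A convex combination of `f_x(p)` and `f_x(q)` is the image of a point of the arc `pq`. -/
theorem convex_centralProj_image (hC : SphConvex d K) (hKx : K ⊆ openHemi d x) :
    Convex ℝ (centralProj x '' K) := by
  rintro _ ⟨p, hp, rfl⟩ _ ⟨q, hq, rfl⟩ a b ha hb hab
  have hcp := (hKx hp).2
  have hcq := (hKx hq).2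
  set w := a • centralProj x p + b • centralProj x q
  have hw : ⟪x, w⟫ = 1 := by
    rw [inner_add_right, real_inner_smul_right, real_inner_smul_right,
      inner_centralProj hcp.ne', inner_centralProj hcq.ne', mul_one, mul_one, hab]
  have hw' : w = (a * ⟪x, p⟫⁻¹) • p + (b * ⟪x, q⟫⁻¹) • q := by
    simp only [w, centralProj, smul_smul]
  have hpos : 0 < a * ⟪x, p⟫⁻¹ + b * ⟪x, q⟫⁻¹ := by
    rcases ha.eq_or_lt with rfl | ha
    · rw [zero_add] at hab; subst hab; simpa using hcq
    · have := mul_pos ha (inv_pos.2 hcp); positivity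
  refine ⟨nproj w, hC.2.2 p hp q hq ?_, ?_⟩
  · rw [hw']
    exact nproj_smul_add_smul_mem_sphSeg (by positivity) (by positivity) hpos
  · rw [centralProj_nproj x (ne_zero_of_mem_tangentHyperplane (x := x) hw),
      centralProj_of_inner_eq_one hw]

theorem centralProj_image_mem_nhdsWithin_iff (hKx : K ⊆ openHemi d x)
    (hz : z ∈ tangentHyperplane x) :
    centralProj x '' K ∈ 𝓝[tangentHyperplane x] z ↔ K ∈ 𝓝[uSphere d] (nproj z) := by
  have hzH := nproj_mem_openHemi (d := d) hz
  have hz0 := ne_zero_of_mem_tangentHyperplane hz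
  constructor
  · intro h
    have hf : Tendsto (centralProj x) (𝓝[uSphere d] (nproj z)) (𝓝[tangentHyperplane x] z) := by
      refine tendsto_nhdsWithin_iff.2 ⟨?_, ?_⟩
      · have := (continuousAt_centralProj hzH.2.ne').tendsto.mono_left
          (nhdsWithin_le_nhds (s := uSphere d))
        rwa [centralProj_nproj x hz0, centralProj_of_inner_eq_one hz] at this
      · filter_upwards [openHemi_mem_nhdsWithin hzH] with y hy
        exact centralProj_mem_tangentHyperplane hy
    filter_upwards [hf h, openHemi_mem_nhdsWithin hzH] with y hy hyH
    exact (centralProj_mem_image_iff hKx hyH).1 hy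
  · intro h
    have hn : Tendsto nproj (𝓝[tangentHyperplane x] z) (𝓝[uSphere d] (nproj z)) :=
      (continuousAt_nproj hz0).continuousWithinAt.tendsto_nhdsWithin
        fun y hy => nproj_mem_uSphere (ne_zero_of_mem_tangentHyperplane hy)
    filter_upwards [hn h, self_mem_nhdsWithin] with y hy hyT
    exact ⟨nproj y, hy, by rw [centralProj_nproj x (ne_zero_of_mem_tangentHyperplane hyT),
      centralProj_of_inner_eq_one hyT]⟩

theorem affineSpan_centralProj_image (hK : IsSphBody d K) (hKx : K ⊆ openHemi d x) :
    affineSpan ℝ (centralProj x '' K) = tangentHyperplane x := by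
  obtain ⟨q, hq⟩ := hK.2.2
  have hqH := hKx (sphInt_subset hq)
  refine affineSpan_eq_of_mem_nhdsWithin (z := centralProj x q)
    (centralProj_image_subset_tangentHyperplane hKx)
    (centralProj_mem_tangentHyperplane hqH) ?_
  rw [centralProj_image_mem_nhdsWithin_iff hKx (centralProj_mem_tangentHyperplane hqH),
    nproj_centralProj_of_mem_openHemi hqH]
  exact (mem_sphInt_iff.1 hq).2

theorem mem_intrinsicInterior_centralProj_image_iff (hK : IsSphBody d K)
    (hKx : K ⊆ openHemi d x) :
    z ∈ intrinsicInterior ℝ (centralProj x '' K) ↔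
      z ∈ tangentHyperplane x ∧ nproj z ∈ sphInt d K := by
  rw [mem_intrinsicInterior_iff_of_affineSpan_eq (affineSpan_centralProj_image hK hKx)]
  refine and_congr_right fun hz => ?_
  rw [centralProj_image_mem_nhdsWithin_iff hKx hz, mem_sphInt_iff,
    and_iff_right (nproj_mem_uSphere (ne_zero_of_mem_tangentHyperplane hz))]

theorem centralProj_mem_intrinsicInterior_iff (hK : IsSphBody d K) (hKx : K ⊆ openHemi d x)
    (hy : y ∈ openHemi d x) :
    centralProj x y ∈ intrinsicInterior ℝ (centralProj x '' K) ↔ y ∈ sphInt d K := by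
  rw [mem_intrinsicInterior_centralProj_image_iff hK hKx, nproj_centralProj_of_mem_openHemi hy]
  exact and_iff_right (centralProj_mem_tangentHyperplane hy)

theorem intrinsicFrontier_centralProj_image (hK : IsSphBody d K) (hKx : K ⊆ openHemi d x) :
    intrinsicFrontier ℝ (centralProj x '' K) = centralProj x '' sphBd d K := by
  rw [intrinsicFrontier_eq_diff_of_isClosed (isCompact_centralProj_image hK.1 hKx).isClosed]
  ext z
  constructor
  · rintro ⟨⟨q, hq, rfl⟩, hz⟩
    exact ⟨q, ⟨hq, fun h => hz ((centralProj_mem_intrinsicInterior_iff hK hKx (hKx hq)).2 h)⟩, rfl⟩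
  · rintro ⟨q, ⟨hq, hqi⟩, rfl⟩
    exact ⟨mem_image_of_mem _ hq,
      fun h => hqi ((centralProj_mem_intrinsicInterior_iff hK hKx (hKx hq)).1 h)⟩

end Hemisphere

section Polar

variable {d : ℕ} {K : Set (Euc (d + 1))} {x : Euc (d + 1)}

/-- Points `nproj (-x + ε • y)` with small `ε > 0` lie in `K*`, and pairing them with `y`
gives `ε ≤ ⟪x, y⟫`. -/
theorem subset_openHemi_of_neg_mem_sphInt_sphPolar (hKS : K ⊆ uSphere d)
    (h : -x ∈ sphInt d (sphPolar d K)) : K ⊆ openHemi d x := by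
  intro y hy
  refine ⟨hKS hy, ?_⟩
  obtain ⟨hxS, hP⟩ := mem_sphInt_iff.1 h
  have hx0 : -x ≠ 0 := norm_ne_zero_iff.1 (by rw [mem_uSphere_iff.1 hxS]; exact one_ne_zero)
  have hg : Tendsto (fun ε : ℝ => -x + ε • y) (𝓝 0) (𝓝 (-x)) := by
    have hc : Continuous fun ε : ℝ => -x + ε • y := by fun_prop
    simpa using hc.tendsto 0
  have hng : Tendsto (fun ε : ℝ => nproj (-x + ε • y)) (𝓝 0) (𝓝[uSphere d] (-x)) := by
    refine tendsto_nhdsWithin_iff.2 ⟨?_, (hg.eventually_ne hx0).mono fun ε => nproj_mem_uSphere⟩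
    have h := (continuousAt_nproj hx0).tendsto.comp hg
    rwa [nproj_of_norm_eq_one (mem_uSphere_iff.1 hxS)] at h
  obtain ⟨ε, ⟨hεP, hε0⟩, hε⟩ := (((hng.eventually hP).and (hg.eventually_ne hx0)).filter_mono
    nhdsWithin_le_nhds |>.and (self_mem_nhdsWithin (s := Ioi (0 : ℝ)))).exists
  have hpair := hεP.2 y hy
  rw [nproj, real_inner_smul_left, inner_add_left, inner_neg_left, real_inner_smul_left,
    real_inner_self_eq_norm_sq, mem_uSphere_iff.1 (hKS hy)] at hpair
  have := nonpos_of_mul_nonpos_left (by rwa [mul_comm] at hpair) (inv_pos.2 (norm_pos_iff.2 hε0))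
  linarith [show (0 : ℝ) < ε from hε]

theorem neg_mem_sphInt_sphPolar (hKc : IsCompact K) (hx : x ∈ uSphere d)
    (hKx : K ⊆ openHemi d x) : -x ∈ sphInt d (sphPolar d K) := by
  have hev : ∀ᶠ w in 𝓝 (-x), ∀ y ∈ K, ⟪w, y⟫ < 0 := by
    refine hKc.eventually_forall_of_forall_eventually fun y hy => ?_
    refine (continuous_inner.tendsto (-x, y)).eventually_lt_const ?_
    rw [inner_neg_left, neg_lt_zero]
    exact (hKx hy).2
  exact mem_sphInt_iff.2 ⟨neg_mem_uSphere hx,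
    mem_nhdsWithin_iff_eventually.2 (hev.mono fun w hw hwS => ⟨hwS, fun y hy => (hw y hy).le⟩)⟩

end Polar

section Connectedness

variable {d : ℕ} {K : Set (Euc (d + 1))}

theorem SphConvex.isPreconnected (hC : SphConvex d K) : IsPreconnected K := by
  obtain ⟨x, -, hKx⟩ := hC.2.1
  have hK : nproj '' (centralProj x '' K) = K :=
    LeftInvOn.image_image fun y hy => nproj_centralProj_of_mem_openHemi (hKx hy)
  rw [← hK]
  exact (convex_centralProj_image hC hKx).isPreconnected.image _ fun z hz =>
    (continuousAt_nproj (ne_zero_of_mem_tangentHyperplane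
      (centralProj_image_subset_tangentHyperplane hKx hz))).continuousWithinAt

theorem SphConvex.subset_openHemi_or (hC : SphConvex d K) {u : Euc (d + 1)}
    (hu : greatSphere d u ∩ K = ∅) : K ⊆ openHemi d u ∨ K ⊆ openHemi d (-u) := by
  by_contra! h
  obtain ⟨⟨y₁, hy₁, h₁⟩, ⟨y₂, hy₂, h₂⟩⟩ := And.imp not_subset.1 not_subset.1 h
  have h₁ : ⟪u, y₁⟫ ≤ 0 := not_lt.1 fun h => h₁ ⟨hC.1 hy₁, h⟩
  have h₂ : 0 ≤ ⟪u, y₂⟫ := by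
    refine neg_nonpos.1 (not_lt.1 fun h => h₂ ⟨hC.1 hy₂, ?_⟩)
    rwa [inner_neg_left]
  obtain ⟨y, hy, hy0⟩ := (hC.isPreconnected.image _
    (continuous_const.inner continuous_id).continuousOn).Icc_subset
    (mem_image_of_mem _ hy₁) (mem_image_of_mem _ hy₂) ⟨h₁, h₂⟩
  exact (eq_empty_iff_forall_notMem.1 hu) y ⟨⟨hC.1 hy, hy0⟩, hy⟩

end Connectedness

section Illumination

variable {d : ℕ} {K : Set (Euc (d + 1))} {x q v : Euc (d + 1)}

theorem exists_add_smul_mem_intrinsicInterior_of_sphIlluminated (hK : IsSphBody d K)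
    (hKx : K ⊆ openHemi d x) (hv : ⟪x, v⟫ = 0) (hq : q ∈ K)
    (h : SphIlluminated d K (-v) q) :
    ∃ t : ℝ, 0 < t ∧ centralProj x q + t • v ∈ intrinsicInterior ℝ (centralProj x '' K) := by
  obtain ⟨-, hseg, z, ⟨hzS, hzspan⟩, hzint⟩ := h
  obtain ⟨α, β, rfl⟩ := Submodule.mem_span_pair.1 hzspan
  have hv' : ⟪x, -v⟫ = 0 := by rw [inner_neg_right, hv, neg_zero]
  have hcq := (hKx hq).2
  have hzH := hKx (sphInt_subset hzint)
  have hβ : 0 < β := by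
    have hz := hzH.2
    rw [inner_smul_add_smul_of_inner_eq_zero hv'] at hz
    exact pos_of_mul_pos_left hz hcq.le
  have hα : α < 0 := by
    by_contra! hα
    refine (eq_empty_iff_forall_notMem.1 hseg) _ ⟨?_, hzint⟩
    rw [← nproj_of_norm_eq_one (mem_uSphere_iff.1 hzS)]
    exact nproj_smul_add_smul_mem_sphSeg hα hβ.le (by linarith)
  refine ⟨-α / (β * ⟪x, q⟫), div_pos (neg_pos.2 hα) (mul_pos hβ hcq), ?_⟩
  have hz := (centralProj_mem_intrinsicInterior_iff hK hKx hzH).2 hzint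
  rwa [centralProj_smul_add_smul hv' hcq.ne' hβ.ne', smul_neg, ← neg_smul, ← neg_div] at hz

/-- An interior point of the arc would map to some `f_x(q) - τ v` with `τ ≥ 0`, putting `f_x(q)`
between two relative interior points. -/
theorem sphSeg_neg_inter_sphInt_eq_empty (hK : IsSphBody d K) (hKx : K ⊆ openHemi d x)
    (hv : ⟪x, v⟫ = 0) (hq : q ∈ sphBd d K) {t : ℝ} (ht : 0 < t)
    (h : centralProj x q + t • v ∈ intrinsicInterior ℝ (centralProj x '' K)) :
    sphSeg (-v) q ∩ sphInt d K = ∅ := by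
  obtain ⟨hqK, hqi⟩ := hq
  have hv' : ⟪x, -v⟫ = 0 := by rw [inner_neg_right, hv, neg_zero]
  have hcq := (hKx hqK).2
  refine eq_empty_iff_forall_notMem.2 ?_
  rintro _ ⟨⟨s, hs, rfl⟩, hw⟩
  have hwH := hKx (sphInt_subset hw)
  have hsc : 0 < s * ⟪x, q⟫ := by
    have hw' := hwH.2
    simp only [inner_nproj, inner_smul_add_smul_of_inner_eq_zero hv'] at hw'
    exact pos_of_mul_pos_right hw' (inv_nonneg.2 (norm_nonneg _))
  have hs0 : 0 < s := pos_of_mul_pos_left hsc hcq.le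
  have hw0 : (1 - s) • -v + s • q ≠ 0 := by
    intro h0
    have := inner_smul_add_smul_of_inner_eq_zero (q := q) hv' (1 - s) s
    rw [h0, inner_zero_right] at this
    linarith
  have hb := (centralProj_mem_intrinsicInterior_iff hK hKx hwH).2 hw
  rw [centralProj_nproj x hw0, centralProj_smul_add_smul hv' hcq.ne' hs0.ne'] at hb
  set τ := (1 - s) / (s * ⟪x, q⟫)
  have hτ : 0 ≤ τ := div_nonneg (by linarith [hs.2]) hsc.le
  refine hqi ((centralProj_mem_intrinsicInterior_iff hK hKx (hKx hqK)).1 ?_)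
  convert (convex_centralProj_image hK.2.1 hKx).intrinsicInterior h hb
    (by positivity : 0 ≤ τ / (t + τ)) (by positivity : 0 ≤ t / (t + τ)) (by field_simp; ring)
    using 1
  match_scalars <;> field_simp <;> ring

theorem sphIlluminated_of_add_smul_mem_intrinsicInterior (hK : IsSphBody d K)
    (hKx : K ⊆ openHemi d x) (hv : ⟪x, v⟫ = 0) (hq : q ∈ sphBd d K) {t : ℝ} (ht : 0 < t)
    (h : centralProj x q + t • v ∈ intrinsicInterior ℝ (centralProj x '' K)) :
    SphIlluminated d K (-v) q := by
  have hcq := (hKx hq.1).2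
  obtain ⟨haT, hai⟩ := (mem_intrinsicInterior_centralProj_image_iff hK hKx).1 h
  refine ⟨?_, sphSeg_neg_inter_sphInt_eq_empty hK hKx hv hq ht h, _,
    ⟨nproj_mem_uSphere (ne_zero_of_mem_tangentHyperplane haT), ?_⟩, hai⟩
  · rw [neg_neg]
    rintro rfl
    exact hcq.ne' hv
  · refine Submodule.smul_mem _ _ (Submodule.mem_span_pair.2 ⟨-t, ⟪x, q⟫⁻¹, ?_⟩)
    rw [centralProj]
    module

theorem sphIlluminated_neg_iff (hK : IsSphBody d K) (hKx : K ⊆ openHemi d x)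
    (hv : ⟪x, v⟫ = 0) (hq : q ∈ sphBd d K) :
    SphIlluminated d K (-v) q ↔
      ∃ t : ℝ, 0 < t ∧ centralProj x q + t • v ∈ intrinsicInterior ℝ (centralProj x '' K) :=
  ⟨exists_add_smul_mem_intrinsicInterior_of_sphIlluminated hK hKx hv hq.1,
    fun ⟨_, ht, h⟩ => sphIlluminated_of_add_smul_mem_intrinsicInterior hK hKx hv hq ht h⟩

end Illumination

section IlluminationNumber

variable {d : ℕ} {K : Set (Euc (d + 1))} {x : Euc (d + 1)}

theorem sphIllumNumber_le_intIllumNumber (hK : IsSphBody d K) (hx : x ∈ uSphere d)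
    (hKx : K ⊆ openHemi d x) :
    sphIllumNumber d K ≤ intIllumNumber (centralProj x '' K) := by
  classical
  refine le_sInf ?_
  rintro _ ⟨D, hD, hDK, rfl⟩
  have hDx : ∀ v ∈ D, ⟪x, v⟫ = 0 := fun v hv => by
    have := (hD v hv).2
    rwa [affineSpan_centralProj_image hK hKx,
      mem_direction_tangentHyperplane (self_mem_tangentHyperplane hx)] at this
  calc sphIllumNumber d K ≤ (D.image Neg.neg).card := sInf_le ⟨x, hx, ?_, _, ?_, ?_, rfl⟩
    _ ≤ D.card := Nat.cast_le.2 Finset.card_image_le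
  · exact eq_empty_iff_forall_notMem.2 fun y ⟨⟨_, hy0⟩, hyK⟩ => (hKx hyK).2.ne' hy0
  · intro p hp
    obtain ⟨v, hv, rfl⟩ := Finset.mem_image.1 hp
    refine ⟨neg_mem_uSphere (mem_uSphere_iff.2 (hD v hv).1), ?_⟩
    rw [inner_neg_right, hDx v hv, neg_zero]
  · intro q hq
    obtain ⟨v, hv, t, ht, h⟩ := hDK (centralProj x q) (by
      rw [intrinsicFrontier_centralProj_image hK hKx]; exact mem_image_of_mem _ hq)
    exact ⟨-v, Finset.mem_coe.2 (Finset.mem_image_of_mem _ hv),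
      (sphIlluminated_neg_iff hK hKx (hDx v hv) hq).2 ⟨t, ht, h⟩⟩

theorem intIllumNumber_le_card (hK : IsSphBody d K) (hx : x ∈ uSphere d)
    (hKx : K ⊆ openHemi d x) {S : Finset (Euc (d + 1))} (hS : ↑S ⊆ greatSphere d x)
    (hSK : SphIlluminates d K S) :
    intIllumNumber (centralProj x '' K) ≤ S.card := by
  classical
  have hSx : ∀ p ∈ S, ⟪x, -p⟫ = 0 := fun p hp => by
    rw [inner_neg_right, (hS hp).2, neg_zero]
  calc intIllumNumber (centralProj x '' K) ≤ (S.image Neg.neg).card :=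
        sInf_le ⟨_, fun v hv => ?_, ?_, rfl⟩
    _ ≤ S.card := Nat.cast_le.2 Finset.card_image_le
  · obtain ⟨p, hp, rfl⟩ := Finset.mem_image.1 hv
    refine ⟨by rw [norm_neg]; exact mem_uSphere_iff.1 (hS hp).1, ?_⟩
    rw [affineSpan_centralProj_image hK hKx,
      mem_direction_tangentHyperplane (self_mem_tangentHyperplane hx)]
    exact hSx p hp
  · rw [intrinsicFrontier_centralProj_image hK hKx]
    rintro _ ⟨q, hq, rfl⟩
    obtain ⟨p, hp, hpq⟩ := hSK q hq
    rw [← neg_neg p] at hpq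
    exact ⟨-p, Finset.mem_image_of_mem _ hp, (sphIlluminated_neg_iff hK hKx (hSx p hp) hq).1 hpq⟩

end IlluminationNumber

/-- For `-x` interior to `K*`, the central projection `f_x(K)` is a convex body of the
tangent hyperplane at `x`, and `I_{S^d}(K) = min { I(f_x(K)) : -x ∈ int K* }`. -/
theorem stmt8 (d : ℕ) (K : Set (Euc (d + 1))) (hK : IsSphBody d K) :
    (∀ x ∈ uSphere d, -x ∈ sphInt d (sphPolar d K) →
      IsCompact (centralProj x '' K) ∧ Convex ℝ (centralProj x '' K) ∧
        (affineSpan ℝ (centralProj x '' K) : Set (Euc (d + 1))) = {y | ⟪x, y⟫ = 1} ∧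
        (intrinsicInterior ℝ (centralProj x '' K)).Nonempty) ∧
    sphIllumNumber d K = sInf {m : ℕ∞ | ∃ x ∈ uSphere d,
      -x ∈ sphInt d (sphPolar d K) ∧ m = intIllumNumber (centralProj x '' K)} := by
  have hKS : K ⊆ uSphere d := hK.2.1.1
  refine ⟨fun x _ hx => ?_, le_antisymm ?_ ?_⟩
  · have hKx := subset_openHemi_of_neg_mem_sphInt_sphPolar hKS hx
    obtain ⟨q, hq⟩ := hK.2.2
    refine ⟨isCompact_centralProj_image hK.1 hKx, convex_centralProj_image hK.2.1 hKx,
      by rw [affineSpan_centralProj_image hK hKx]; rfl, centralProj x q,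
      (centralProj_mem_intrinsicInterior_iff hK hKx (hKx (sphInt_subset hq))).2 hq⟩
  · refine le_sInf ?_
    rintro _ ⟨x, hx, hxK, rfl⟩
    exact sphIllumNumber_le_intIllumNumber hK hx
      (subset_openHemi_of_neg_mem_sphInt_sphPolar hKS hxK)
  · refine le_sInf ?_
    rintro _ ⟨u, hu, huK, S, hS, hSK, rfl⟩
    rcases hK.2.1.subset_openHemi_or huK with hKu | hKu
    · exact sInf_le_of_le ⟨u, hu, neg_mem_sphInt_sphPolar hK.1 hu hKu, rfl⟩
        (intIllumNumber_le_card hK hu hKu hS hSK)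
    · rw [← greatSphere_neg] at hS
      have hu' := neg_mem_uSphere hu
      refine sInf_le_of_le ⟨-u, hu', ?_, rfl⟩ (intIllumNumber_le_card hK hu' hKu hS hSK)
      simpa using neg_mem_sphInt_sphPolar hK.1 hu' hKu
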